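/- Let (h, ·) be a commutative associative algebra, D a derivation of h, and consider the Novikov product x ∗ y = x·D(y). This product ∗ is associative if and only if x·y·D²(z) = 0 for all x, y, z in h. In particular, if D² = 0 then ∗ is Novikov and associative. -/

import Mathlib

/-! Expanding `D (y · D z)` by the Leibniz rule gives
`x ∗ (y ∗ z) = (x ∗ y) ∗ z + x·y·D²(z)`, so associativity of `∗` is exactly the vanishing of the
last term. -/

section NovikovProduct

variable {R M : Type*} [CommSemiring R] [AddCommGroup M] [Module R M]
  (mul : M →ₗ[R] M →ₗ[R] M) (D : M →ₗ[R] M)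

theorem mul_apply_mul_deriv (hassoc : ∀ x y z, mul (mul x y) z = mul x (mul y z))
    (hD : ∀ x y, D (mul x y) = mul (D x) y + mul x (D y)) (x y z : M) :
    mul x (D (mul y (D z))) = mul (mul x (D y)) (D z) + mul (mul x y) (D (D z)) := by
  rw [hD, map_add, hassoc, hassoc]

theorem novikov_assoc_iff (hassoc : ∀ x y z, mul (mul x y) z = mul x (mul y z))
    (hD : ∀ x y, D (mul x y) = mul (D x) y + mul x (D y)) :
    (∀ x y z, mul (mul x (D y)) (D z) = mul x (D (mul y (D z)))) ↔
      ∀ x y z, mul (mul x y) (D (D z)) = 0 := by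
  simp only [mul_apply_mul_deriv mul D hassoc hD, left_eq_add]

theorem novikov_right_comm (hcomm : ∀ x y, mul x y = mul y x)
    (hassoc : ∀ x y z, mul (mul x y) z = mul x (mul y z)) (x y z : M) :
    mul (mul x (D y)) (D z) = mul (mul x (D z)) (D y) := by
  rw [hassoc, hassoc, hcomm (D y)]

end NovikovProduct

theorem snla_stmt_13 (h : Type*) [AddCommGroup h] [Module ℝ h]
    (mul : h →ₗ[ℝ] h →ₗ[ℝ] h)
    (hcomm : ∀ x y : h, mul x y = mul y x)
    (hassoc : ∀ x y z : h, mul (mul x y) z = mul x (mul y z))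
    (D : h →ₗ[ℝ] h)
    (hD : ∀ x y : h, D (mul x y) = mul (D x) y + mul x (D y)) :
    ((∀ x y z : h, mul (mul x (D y)) (D z) = mul x (D (mul y (D z)))) ↔
      (∀ x y z : h, mul (mul x y) (D (D z)) = 0)) ∧
    ((∀ x : h, D (D x) = 0) →
      ((∀ x y z : h, mul (mul x (D y)) (D z) = mul (mul x (D z)) (D y)) ∧
        (∀ x y z : h, mul (mul x (D y)) (D z) = mul x (D (mul y (D z)))))) := by
  have assoc_iff := novikov_assoc_iff mul D hassoc hD
  refine ⟨assoc_iff, fun hD2 => ⟨novikov_right_comm mul D hcomm hassoc, ?_⟩⟩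
  exact assoc_iff.mpr fun x y z => by rw [hD2, map_zero]
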